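/- Let (X,d) be a metric space satisfying Sturm's inequality: for all N, x₁,…,x_N ∈ X, y ∈ X and weights aᵢ ∈ [0,1] with Σaᵢ = 1, Σ_{i,j} aᵢaⱼ( d(xᵢ,xⱼ)² − d(xᵢ,y)² − d(xⱼ,y)² ) ≤ 0. Then for every l ∈ ℕ, every N, points x₁,…,x_N ∈ X, probability vector (πᵢ) and π-reversible row-stochastic matrix A = (a_{ij}), one has Σ_{i,j} πᵢ a^{(l)}_{ij} d(xᵢ,xⱼ)² ≤ (1+√2)² · l · Σ_{i,j} πᵢ a_{ij} d(xᵢ,xⱼ)². -/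

import Mathlib

/-!
Let `E m = ∑ᵢⱼ πᵢ (Aᵐ)ᵢⱼ d(xᵢ, xⱼ)²`. Weighting two-step paths `i → j → k` by `πᵢ Bᵢⱼ Cⱼₖ`,
the triangle inequality and Cauchy–Schwarz give `√E (m + n) ≤ √E m + √E n`. By reversibility the
same path sum for `B = C = Aᵐ` is a `π`-average over the middle point `j` of Sturm sums with
weights `Aᵐ j ·` and base point `x j`, so `E (2m) ≤ 2 E m`. Splitting `l = 2 ^ K + r` with
`r ≤ 2 ^ K` and inducting on `l` then yields `√E l ≤ (1 + √2) √l √E 1`.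
-/

open Finset Matrix

lemma sqrt_sum_mul_sq_le_of_le_add {ι : Type*} (s : Finset ι) {w f g h : ι → ℝ}
    (hw : ∀ i ∈ s, 0 ≤ w i) (hh : ∀ i ∈ s, 0 ≤ h i) (hle : ∀ i ∈ s, h i ≤ f i + g i) :
    √(∑ i ∈ s, w i * h i ^ 2) ≤ √(∑ i ∈ s, w i * f i ^ 2) + √(∑ i ∈ s, w i * g i ^ 2) := by
  set F := ∑ i ∈ s, w i * f i ^ 2
  set G := ∑ i ∈ s, w i * g i ^ 2
  have hF : 0 ≤ F := sum_nonneg fun i hi => mul_nonneg (hw i hi) (sq_nonneg _)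
  have hG : 0 ≤ G := sum_nonneg fun i hi => mul_nonneg (hw i hi) (sq_nonneg _)
  have cauchySchwarz : ∑ i ∈ s, w i * (f i * g i) ≤ √F * √G := by
    rw [← Real.sqrt_mul hF]
    refine Real.le_sqrt_of_sq_le (sum_sq_le_sum_mul_sum_of_sq_le_mul s
      (fun i hi => mul_nonneg (hw i hi) (sq_nonneg _))
      (fun i hi => mul_nonneg (hw i hi) (sq_nonneg _)) fun i _ => le_of_eq (by ring))
  have pointwise : ∑ i ∈ s, w i * h i ^ 2 ≤ F + 2 * ∑ i ∈ s, w i * (f i * g i) + G := by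
    simp only [F, G, mul_sum, ← sum_add_distrib]
    refine sum_le_sum fun i hi => ?_
    have : h i ^ 2 ≤ (f i + g i) ^ 2 := pow_le_pow_left₀ (hh i hi) (hle i hi) 2
    nlinarith [hw i hi]
  rw [Real.sqrt_le_iff]
  refine ⟨by positivity, pointwise.trans ?_⟩
  nlinarith [Real.sq_sqrt hF, Real.sq_sqrt hG]

-- `1 + √2` is the least `c` with `1 + c * t ≤ c * √(1 + t ^ 2)` on `[0, 1]`; equality at `t = 1`.
lemma sqrt_add_one_add_sqrt_two_mul_sqrt_le {a b : ℝ} (hb : 0 ≤ b) (hba : b ≤ a) :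
    √a + (1 + √2) * √b ≤ (1 + √2) * √(a + b) := by
  refine le_of_pow_le_pow_left₀ two_ne_zero (by positivity) ?_
  have hsa := Real.sq_sqrt (hb.trans hba)
  have hsb := Real.sq_sqrt hb
  have hsab := Real.sq_sqrt (add_nonneg (hb.trans hba) hb)
  have hs2 := Real.sq_sqrt (zero_le_two : (0 : ℝ) ≤ 2)
  have gap : ((1 + √2) * √(a + b)) ^ 2 - (√a + (1 + √2) * √b) ^ 2 =
      2 * (1 + √2) * (√a * (√a - √b)) := by
    linear_combination (1 + √2) ^ 2 * hsab - (1 + √2) ^ 2 * hsb - (3 + 2 * √2) * hsa + a * hs2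
  have : 0 ≤ √a * (√a - √b) :=
    mul_nonneg (Real.sqrt_nonneg a) (sub_nonneg.2 (Real.sqrt_le_sqrt hba))
  nlinarith [Real.sqrt_nonneg 2]

theorem Subadditive.le_one_add_sqrt_two_mul {f : ℕ → ℝ} (hf : Subadditive f) (h0 : f 0 ≤ 0)
    (h1 : 0 ≤ f 1) (hdouble : ∀ m, f (2 * m) ≤ √2 * f m) (l : ℕ) :
    f l ≤ (1 + √2) * √l * f 1 := by
  have hpow (k : ℕ) : f (2 ^ k) ≤ √(2 ^ k) * f 1 := by
    induction k with
    | zero => simp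
    | succ k ih =>
      rw [pow_succ', pow_succ', Real.sqrt_mul zero_le_two, mul_assoc]
      exact (hdouble _).trans (mul_le_mul_of_nonneg_left ih (Real.sqrt_nonneg 2))
  induction l using Nat.strong_induction_on with
  | _ l ih =>
    rcases l.eq_zero_or_pos with rfl | hl
    · simpa using h0
    obtain ⟨K, hKl, hlK⟩ : ∃ K, 2 ^ K ≤ l ∧ l < 2 ^ (K + 1) :=
      ⟨_, Nat.pow_log_le_self 2 hl.ne', Nat.lt_pow_succ_log_self one_lt_two l⟩
    obtain ⟨r, rfl⟩ := Nat.exists_eq_add_of_le hKl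
    have hr : (r : ℝ) ≤ 2 ^ K := by
      rw [pow_succ] at hlK
      exact_mod_cast (by omega : r ≤ 2 ^ K)
    calc f (2 ^ K + r) ≤ f (2 ^ K) + f r := hf _ _
      _ ≤ √(2 ^ K) * f 1 + (1 + √2) * √r * f 1 :=
        add_le_add (hpow K) (ih r (by have := Nat.one_le_two_pow (n := K); omega))
      _ = (√(2 ^ K) + (1 + √2) * √r) * f 1 := by ring
      _ ≤ (1 + √2) * √(2 ^ K + r) * f 1 := by
        gcongr
        exact sqrt_add_one_add_sqrt_two_mul_sqrt_le r.cast_nonneg hr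
      _ = _ := by push_cast; ring

namespace MarkovType

section Reversible

variable {ι R : Type*} [Fintype ι] [CommSemiring R]

def IsReversible (p : ι → R) (A : Matrix ι ι R) : Prop :=
  ∀ i j, p i * A i j = p j * A j i

variable {p : ι → R} {A : Matrix ι ι R}

lemma isReversible_iff_semiconjBy [DecidableEq ι] :
    IsReversible p A ↔ SemiconjBy (diagonal p) A Aᵀ := by
  simp only [IsReversible, SemiconjBy, ← Matrix.ext_iff, diagonal_mul, mul_diagonal,
    transpose_apply, mul_comm (A _ _)]

lemma IsReversible.pow [DecidableEq ι] (h : IsReversible p A) (m : ℕ) :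
    IsReversible p (A ^ m) := by
  rw [isReversible_iff_semiconjBy, transpose_pow] at *
  exact h.pow_right m

lemma IsReversible.sum_mul_eq (h : IsReversible p A) (hA : ∀ i, ∑ j, A i j = 1) (j : ι) :
    ∑ i, p i * A i j = p j := by
  simp only [h _ j, ← mul_sum, hA, mul_one]

end Reversible

section Energy

variable {X ι : Type*} [MetricSpace X] [Fintype ι] (x : ι → X) (p : ι → ℝ)

noncomputable def energy (B : Matrix ι ι ℝ) : ℝ :=
  ∑ i, ∑ j, p i * B i j * dist (x i) (x j) ^ 2

variable {x p} {B C : Matrix ι ι ℝ}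

lemma energy_nonneg (hp : ∀ i, 0 ≤ p i) (hB : ∀ i j, 0 ≤ B i j) : 0 ≤ energy x p B :=
  sum_nonneg fun i _ => sum_nonneg fun j _ => mul_nonneg (mul_nonneg (hp i) (hB i j)) (sq_nonneg _)

@[simp]
lemma energy_one [DecidableEq ι] : energy x p 1 = 0 :=
  sum_eq_zero fun i _ => sum_eq_zero fun j _ => by
    by_cases h : i = j <;> simp [h, one_apply_ne]

lemma energy_mul_eq_sum_path :
    energy x p (B * C) = ∑ i, ∑ j, ∑ k, p i * B i j * C j k * dist (x i) (x k) ^ 2 := by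
  refine sum_congr rfl fun i _ => ?_
  rw [sum_comm]
  simp only [mul_apply, mul_sum, sum_mul, mul_assoc]

lemma sum_path_dist_sq_first_step (hC : ∀ j, ∑ k, C j k = 1) :
    ∑ i, ∑ j, ∑ k, p i * B i j * C j k * dist (x i) (x j) ^ 2 = energy x p B := by
  refine sum_congr rfl fun i _ => sum_congr rfl fun j _ => ?_
  simp only [mul_right_comm _ (C _ _), ← mul_sum, hC, mul_one]

lemma sum_path_dist_sq_second_step (hB : ∀ j, ∑ i, p i * B i j = p j) :
    ∑ i, ∑ j, ∑ k, p i * B i j * C j k * dist (x j) (x k) ^ 2 = energy x p C := by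
  rw [sum_comm]
  refine sum_congr rfl fun j _ => ?_
  rw [sum_comm]
  refine sum_congr rfl fun k _ => ?_
  rw [← sum_mul, ← sum_mul, hB]

def SturmInequality (x : ι → X) : Prop :=
  ∀ (y : X) (a : ι → ℝ), (∀ i, 0 ≤ a i) → (∀ i, a i ≤ 1) → ∑ i, a i = 1 →
    ∑ i, ∑ j, a i * a j * (dist (x i) (x j) ^ 2 - dist (x i) y ^ 2 - dist (x j) y ^ 2) ≤ 0

variable [DecidableEq ι]

lemma energy_mul_self_le (hx : SturmInequality x) (hp : ∀ i, 0 ≤ p i)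
    (hB : B ∈ rowStochastic ℝ ι) (hrev : IsReversible p B) :
    energy x p (B * B) ≤ 2 * energy x p B := by
  have hrow := sum_row_of_mem_rowStochastic hB
  have expand : ∑ i, ∑ j, ∑ k, p i * B i j * B j k *
      (dist (x i) (x k) ^ 2 - dist (x i) (x j) ^ 2 - dist (x j) (x k) ^ 2) =
      energy x p (B * B) - energy x p B - energy x p B := by
    simp only [mul_sub, sum_sub_distrib]
    rw [← energy_mul_eq_sum_path, sum_path_dist_sq_first_step hrow,
      sum_path_dist_sq_second_step (hrev.sum_mul_eq hrow)]
  have sturm : ∑ i, ∑ j, ∑ k, p i * B i j * B j k *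
      (dist (x i) (x k) ^ 2 - dist (x i) (x j) ^ 2 - dist (x j) (x k) ^ 2) ≤ 0 := by
    rw [sum_comm]
    refine sum_nonpos fun j _ => ?_
    calc _ = p j * ∑ i, ∑ k, B j i * B j k *
          (dist (x i) (x k) ^ 2 - dist (x i) (x j) ^ 2 - dist (x k) (x j) ^ 2) := by
          simp only [mul_sum, hrev _ j, dist_comm (x j)]
          exact sum_congr rfl fun i _ => sum_congr rfl fun k _ => by ring
      _ ≤ 0 := mul_nonpos_of_nonneg_of_nonpos (hp j) <| hx (x j) (B j)
          (fun _ => nonneg_of_mem_rowStochastic hB) (fun _ => le_one_of_mem_rowStochastic hB)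
          (hrow j)
  linarith

lemma sqrt_energy_mul_le (hp : ∀ i, 0 ≤ p i) (hB : ∀ i j, 0 ≤ B i j)
    (hstat : ∀ j, ∑ i, p i * B i j = p j) (hC : C ∈ rowStochastic ℝ ι) :
    √(energy x p (B * C)) ≤ √(energy x p B) + √(energy x p C) := by
  have minkowski := sqrt_sum_mul_sq_le_of_le_add (univ : Finset (ι × ι × ι))
    (w := fun t => p t.1 * B t.1 t.2.1 * C t.2.1 t.2.2)
    (h := fun t => dist (x t.1) (x t.2.2)) (f := fun t => dist (x t.1) (x t.2.1))
    (g := fun t => dist (x t.2.1) (x t.2.2))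
    (fun _ _ => mul_nonneg (mul_nonneg (hp _) (hB _ _)) (nonneg_of_mem_rowStochastic hC))
    (fun _ _ => dist_nonneg) (fun _ _ => dist_triangle _ _ _)
  simp only [Fintype.sum_prod_type] at minkowski
  rwa [energy_mul_eq_sum_path, ← sum_path_dist_sq_first_step (sum_row_of_mem_rowStochastic hC),
    ← sum_path_dist_sq_second_step hstat]

end Energy

end MarkovType

open MarkovType

/-- Main theorem: a metric space satisfying Sturm's inequality (e.g. an Alexandrov space of
nonnegative curvature) has Markov type 2 with constant at most `1 + √2`. -/
theorem stmt6 {X : Type*} [MetricSpace X]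
    (hsturm : ∀ (N : ℕ) (x : Fin N → X) (y : X) (a : Fin N → ℝ),
      (∀ i, 0 ≤ a i) → (∀ i, a i ≤ 1) → ∑ i, a i = 1 →
      ∑ i, ∑ j, a i * a j *
        (dist (x i) (x j) ^ 2 - dist (x i) y ^ 2 - dist (x j) y ^ 2) ≤ 0) :
    ∀ (l N : ℕ) (x : Fin N → X) (p : Fin N → ℝ) (A : Matrix (Fin N) (Fin N) ℝ),
      (∀ i, 0 ≤ p i) → (∀ i, p i ≤ 1) → ∑ i, p i = 1 →
      (∀ i j, 0 ≤ A i j) → (∀ i j, A i j ≤ 1) → (∀ i, ∑ j, A i j = 1) →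
      (∀ i j, p i * A i j = p j * A j i) →
      ∑ i, ∑ j, p i * (A ^ l) i j * dist (x i) (x j) ^ 2 ≤
        (1 + Real.sqrt 2) ^ 2 * l * ∑ i, ∑ j, p i * A i j * dist (x i) (x j) ^ 2 := by
  intro l N x p A hp _ _ hA0 _ hArow (hrev : IsReversible p A)
  have hA : A ∈ rowStochastic ℝ (Fin N) := mem_rowStochastic_iff_sum.2 ⟨hA0, hArow⟩
  have hpow (m : ℕ) : A ^ m ∈ rowStochastic ℝ (Fin N) := pow_mem hA m
  have hsub : Subadditive fun m => √(energy x p (A ^ m)) := fun m n => by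
    simpa only [pow_add] using sqrt_energy_mul_le hp (fun _ _ => nonneg_of_mem_rowStochastic
      (hpow m)) ((hrev.pow m).sum_mul_eq (sum_row_of_mem_rowStochastic (hpow m))) (hpow n)
  have hdouble (m : ℕ) : √(energy x p (A ^ (2 * m))) ≤ √2 * √(energy x p (A ^ m)) := by
    rw [two_mul, pow_add, ← Real.sqrt_mul zero_le_two]
    exact Real.sqrt_le_sqrt (energy_mul_self_le (hsturm N x) hp (hpow m) (hrev.pow m))
  have hbound := hsub.le_one_add_sqrt_two_mul (by simp) (Real.sqrt_nonneg _) hdouble l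
  calc _ ≤ ((1 + √2) * √l * √(energy x p (A ^ 1))) ^ 2 := (Real.sqrt_le_iff.1 hbound).2
    _ = _ := by
      rw [pow_one, mul_pow, mul_pow, Real.sq_sqrt l.cast_nonneg,
        Real.sq_sqrt (energy_nonneg hp hA0)]
      rfl
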